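/- If the game Γ is weighted monotone, then for any exploration rates T_k > 0 the game has a unique Quantal Response Equilibrium x̄, and every interior solution x(t) of the smooth Q-Learning dynamics converges to x̄ as t → ∞. -/

import Mathlib

/-
STATEMENT 1: If the game Γ is weighted monotone, then for any exploration rates
T_k > 0 the game has a unique Quantal Response Equilibrium x̄, and every interior
solution x(t) of the smooth Q-Learning dynamics converges to x̄ as t → ∞.
-/

open Filter Topology

noncomputable section

/-- Joint strategy space: a mixed strategy for each of the `N` players. -/
abbrev Strat {N : ℕ} (n : Fin N → ℕ) := ∀ k, Fin (n k) → ℝ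

/-- `x` lies in the product of standard simplices `Δ = Δ₁ × ⋯ × Δ_N`. -/
def JointSimplex {N : ℕ} {n : Fin N → ℕ} (x : Strat n) : Prop :=
  ∀ k, x k ∈ stdSimplex ℝ (Fin (n k))

/-- `x` lies in the interior of `Δ` (all components positive). -/
def JointInterior {N : ℕ} {n : Fin N → ℕ} (x : Strat n) : Prop :=
  ∀ k, (∀ i, 0 < x k i) ∧ ∑ i, x k i = 1

/-- Quantal Response Equilibrium for reward functions `r` and exploration rates `T`. -/
def IsQRE {N : ℕ} {n : Fin N → ℕ} (r : Strat n → Strat n) (T : Fin N → ℝ) (x : Strat n) : Prop :=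
  JointSimplex x ∧
    ∀ k i, x k i = Real.exp (r x k i / T k) / ∑ j, Real.exp (r x k j / T k)

/-- An interior solution of the smooth Q-Learning dynamics. -/
def QLSolution {N : ℕ} {n : Fin N → ℕ} (r : Strat n → Strat n) (T : Fin N → ℝ)
    (x : ℝ → Strat n) : Prop :=
  (∀ t, JointInterior (x t)) ∧
    ∀ t k i, HasDerivAt (fun s => x s k i)
      (x t k i * (r (x t) k i - (∑ j, x t k j * r (x t) k j)
        - T k * (Real.log (x t k i) - ∑ j, x t k j * Real.log (x t k j)))) t

/-!
Entropy regularisation turns weighted monotonicity into a strict, KL-measured monotonicity.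

*Existence.* Entropic mirror ascent `q ↦ softmax ((1 - η T) log q + η r(q))` satisfies a
three-point identity for the relative entropy; combined with monotonicity it gives, against every
fixed profile `z`, a regret of order `KL(z ‖ q₀) / (η M) + η` after `M` steps. Averaged iterates
therefore accumulate at a Minty point of the regularised variational inequality, which (by
continuity of `r` and concavity of the regularised payoffs) is a best response to itself, i.e. a
logit fixed point by Gibbs' variational principle.

*Convergence.* Along the Q-learning flow, `V t = ∑ k, w k * KL(x̄ k ‖ x t k)` has derivative
`-(gain of moving from x t to x̄ against r (x t)) - ∑ k, w k * T k * KL(x̄ k ‖ x t k)`; the gain is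
nonnegative by monotonicity and the best-response property of `x̄`, so `V` decays exponentially.
Any QRE is a rest point of the flow, which gives uniqueness.
-/

open Real Finset

lemma concaveOn_sum {E κ : Type*} [AddCommMonoid E] [Module ℝ E] {S : Set E} (hS : Convex ℝ S)
    (s : Finset κ) {f : κ → E → ℝ} (hf : ∀ k ∈ s, ConcaveOn ℝ S (f k)) :
    ConcaveOn ℝ S fun x => ∑ k ∈ s, f k x := by
  classical
  induction s using Finset.induction_on with
  | empty => simpa using concaveOn_const 0 hS
  | insert k s hk ih =>
    simp only [sum_insert hk]
    exact (hf k (mem_insert_self k s)).add (ih fun j hj => hf j (mem_insert_of_mem hj))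

lemma neg_le_sum_range_of_le_add {D G : ℕ → ℝ} {η C : ℝ} (hD : ∀ m, 0 ≤ D m)
    (hstep : ∀ m, D (m + 1) ≤ D m + η * G (m + 1) + C) (M : ℕ) :
    -(D 0 + M * C) ≤ η * ∑ m ∈ range M, G (m + 1) := by
  suffices D M ≤ D 0 + η * ∑ m ∈ range M, G (m + 1) + M * C by linarith [hD M]
  induction M with
  | zero => simp
  | succ M ih =>
    rw [sum_range_succ, Nat.cast_succ]
    linarith [hstep M]

lemma tendsto_zero_of_hasDerivAt_le_neg_mul {V V' : ℝ → ℝ} {c : ℝ} (hc : 0 < c)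
    (hV : ∀ t, HasDerivAt V (V' t) t) (hV' : ∀ t, V' t ≤ -c * V t) (hV0 : ∀ t, 0 ≤ V t) :
    Tendsto V atTop (𝓝 0) := by
  have hW t : HasDerivAt (fun s => exp (c * s) * V s)
      (c * exp (c * t) * V t + exp (c * t) * V' t) t := by
    have h : HasDerivAt (fun s => exp (c * s)) (exp (c * t) * c) t := by
      simpa using ((hasDerivAt_id t).const_mul c).exp
    exact (h.mul (hV t)).congr_deriv (by ring)
  have hanti : Antitone fun s => exp (c * s) * V s :=
    antitone_of_deriv_nonpos (fun t => (hW t).differentiableAt) fun t => by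
      rw [(hW t).deriv]
      nlinarith [hV' t, exp_pos (c * t)]
  have hle : ∀ t, 0 ≤ t → V t ≤ exp (-(c * t)) * V 0 := fun t ht => by
    have := hanti ht
    simp only [mul_zero, exp_zero, one_mul] at this
    calc V t = exp (-(c * t)) * (exp (c * t) * V t) := by rw [← mul_assoc, ← exp_add]; simp
      _ ≤ exp (-(c * t)) * V 0 := by gcongr
  have hlim : Tendsto (fun t => exp (-(c * t)) * V 0) atTop (𝓝 0) := by
    simpa using (tendsto_exp_neg_atTop_nhds_zero.comp
      (tendsto_id.const_mul_atTop hc)).mul_const (V 0)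
  exact tendsto_of_tendsto_of_tendsto_of_le_of_le' tendsto_const_nhds hlim
    (Eventually.of_forall hV0) ((eventually_ge_atTop 0).mono hle)

lemma exists_pos_lt_of_forall_pos {κ : Type*} [Finite κ] {f : κ → ℝ} (hf : ∀ k, 0 < f k) :
    ∃ c, 0 < c ∧ ∀ k, c < f k := by
  obtain ⟨c, hc0, hc⟩ := Set.Finite.exists_between' (Set.finite_singleton (0 : ℝ))
    (Set.finite_range f) (by simpa using hf)
  exact ⟨c, hc0 0 rfl, fun k => hc _ ⟨k, rfl⟩⟩

lemma sq_sub_div_two_le_mul_log {p q : ℝ} (hp : 0 ≤ p) (hp1 : p ≤ 1) (hq : 0 < q)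
    (hq1 : q ≤ 1) :
    (p - q) ^ 2 / 2 ≤ p * log p - p * log q + q - p := by
  rcases hp.eq_or_lt with rfl | hp0
  · simp only [zero_mul, sub_zero, zero_sub, zero_add]
    nlinarith
  -- `g` vanishes at `p`, and on `(0, 1]` its derivative has the sign of `y - p`
  set g : ℝ → ℝ := fun y => (p * log p - p * log y) + (y - p) - (p - y) ^ 2 / 2
  have hg : ∀ y, 0 < y → HasDerivAt g ((y - p) * (1 - y) / y) y := by
    intro y hy
    have h := (((hasDerivAt_log hy.ne').const_mul p).const_sub (p * log p)).add
      ((hasDerivAt_id y).sub_const p) |>.sub (((hasDerivAt_id y).const_sub p).pow 2 |>.div_const 2)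
    refine h.congr_deriv ?_
    simp only [id, Nat.cast_ofNat]
    field_simp
    ring
  have hgcont : ∀ s ⊆ Set.Ioi 0, ContinuousOn g s := fun s hs y hy =>
    (hg y (hs hy)).continuousAt.continuousWithinAt
  have hgp : g p = 0 := by simp [g]
  suffices g p ≤ g q by rw [hgp] at this; simp only [g] at this; linarith
  rcases le_total q p with hqp | hpq
  · refine antitoneOn_of_hasDerivWithinAt_nonpos (f' := fun y => (y - p) * (1 - y) / y)
      (convex_Icc q p) (hgcont _ fun y hy => hq.trans_le hy.1) (fun y hy => ?_) (fun y hy => ?_)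
      ⟨le_rfl, hqp⟩ ⟨hqp, le_rfl⟩ hqp
    · rw [interior_Icc] at hy
      exact (hg y (hq.trans hy.1)).hasDerivWithinAt
    · rw [interior_Icc] at hy
      have hy0 := hq.trans hy.1
      exact div_nonpos_of_nonpos_of_nonneg
        (mul_nonpos_of_nonpos_of_nonneg (by linarith [hy.2]) (by linarith [hy.2])) hy0.le
  · refine monotoneOn_of_hasDerivWithinAt_nonneg (f' := fun y => (y - p) * (1 - y) / y)
      (convex_Icc p q) (hgcont _ fun y hy => hp0.trans_le hy.1) (fun y hy => ?_) (fun y hy => ?_)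
      ⟨le_rfl, hpq⟩ ⟨hpq, le_rfl⟩ hpq
    · rw [interior_Icc] at hy
      exact (hg y (hp0.trans hy.1)).hasDerivWithinAt
    · rw [interior_Icc] at hy
      exact div_nonneg (mul_nonneg (by linarith [hy.1]) (by linarith [hy.2]))
        (hp0.trans hy.1).le

section Distributions

variable {ι : Type*} [Fintype ι]

def negEntropy (p : ι → ℝ) : ℝ := ∑ i, p i * log (p i)

def relEntropy (p q : ι → ℝ) : ℝ := ∑ i, (p i * log (p i) - p i * log (q i))

def softmax (s : ι → ℝ) : ι → ℝ := fun i => exp (s i) / ∑ j, exp (s j)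

def regPayoff (T : ℝ) (a p : ι → ℝ) : ℝ := ∑ i, p i * a i - T * negEntropy p

/-- Entropic mirror ascent on `regPayoff T a` with step `η`, from `q`: the multiplicative-weights
update `q ^ (1 - η T) * exp (η a)`, normalised. -/
def entropicStep (T η : ℝ) (a q : ι → ℝ) : ι → ℝ :=
  softmax fun i => (1 - η * T) * log (q i) + η * a i

lemma sum_sq_sub_div_two_le_relEntropy {p q : ι → ℝ} (hp : p ∈ stdSimplex ℝ ι)
    (hq : q ∈ stdSimplex ℝ ι) (hq0 : ∀ i, 0 < q i) :
    (∑ i, (p i - q i) ^ 2) / 2 ≤ relEntropy p q := by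
  have h i := sq_sub_div_two_le_mul_log (hp.1 i) (mem_Icc_of_mem_stdSimplex hp i).2 (hq0 i)
    (mem_Icc_of_mem_stdSimplex hq i).2
  calc (∑ i, (p i - q i) ^ 2) / 2
      ≤ ∑ i, (p i * log (p i) - p i * log (q i) + q i - p i) := by
        rw [sum_div]; exact sum_le_sum fun i _ => h i
    _ = relEntropy p q := by
        simp only [relEntropy, sum_sub_distrib, sum_add_distrib, hp.2, hq.2, add_sub_cancel_right]

lemma relEntropy_nonneg {p q : ι → ℝ} (hp : p ∈ stdSimplex ℝ ι) (hq : q ∈ stdSimplex ℝ ι)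
    (hq0 : ∀ i, 0 < q i) : 0 ≤ relEntropy p q :=
  le_trans (by positivity) (sum_sq_sub_div_two_le_relEntropy hp hq hq0)

lemma eq_of_relEntropy_nonpos {p q : ι → ℝ} (hp : p ∈ stdSimplex ℝ ι) (hq : q ∈ stdSimplex ℝ ι)
    (hq0 : ∀ i, 0 < q i) (h : relEntropy p q ≤ 0) : p = q := by
  have hsq := sum_sq_sub_div_two_le_relEntropy hp hq hq0
  have hzero : ∑ i, (p i - q i) ^ 2 = 0 := le_antisymm (by linarith) (by positivity)
  funext i
  have := (sum_eq_zero_iff_of_nonneg fun i _ => sq_nonneg (p i - q i)).1 hzero i (mem_univ i)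
  nlinarith

lemma regPayoff_sub_regPayoff (T : ℝ) (a b p : ι → ℝ) :
    regPayoff T a p - regPayoff T b p = ∑ i, p i * (a i - b i) := by
  simp only [regPayoff, mul_sub, sum_sub_distrib]; ring

lemma concaveOn_regPayoff {T : ℝ} (hT : 0 ≤ T) (a : ι → ℝ) :
    ConcaveOn ℝ (stdSimplex ℝ ι) (regPayoff T a) := by
  refine ⟨convex_stdSimplex ℝ ι, fun p hp q hq s t hs ht hst => ?_⟩
  have hent : negEntropy (s • p + t • q) ≤ s * negEntropy p + t * negEntropy q := by
    simp only [negEntropy, mul_sum, ← sum_add_distrib]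
    exact sum_le_sum fun i _ => by
      simpa [smul_eq_mul, mul_assoc] using
        convexOn_mul_log.2 (Set.mem_Ici.2 (hp.1 i)) (Set.mem_Ici.2 (hq.1 i)) hs ht hst
  have hlin : ∑ i, (s • p + t • q) i * a i = s * ∑ i, p i * a i + t * ∑ i, q i * a i := by
    simp only [Pi.add_apply, Pi.smul_apply, smul_eq_mul, add_mul, sum_add_distrib, mul_sum,
      mul_assoc]
  simp only [regPayoff, smul_eq_mul, hlin]
  nlinarith [mul_le_mul_of_nonneg_left hent hT]

lemma continuous_regPayoff (T : ℝ) (a : ι → ℝ) :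
    Continuous (regPayoff T a) := by
  unfold regPayoff negEntropy
  fun_prop (disch := exact continuous_mul_log)

lemma sum_mul_qlRate (T : ℝ) (a : ι → ℝ) {x y : ι → ℝ} (hy : ∑ i, y i = 1) :
    ∑ i, y i * (a i - ∑ j, x j * a j - T * (log (x i) - ∑ j, x j * log (x j)))
      = regPayoff T a y - regPayoff T a x + T * relEntropy y x := by
  simp only [regPayoff, relEntropy, negEntropy, mul_sub, sum_sub_distrib, ← sum_mul, hy,
    mul_left_comm _ T, ← mul_sum]
  ring

lemma hasDerivAt_relEntropy (p : ι → ℝ) {x : ℝ → ι → ℝ} {g : ι → ℝ} {t : ℝ}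
    (hx : ∀ i, 0 < x t i) (hd : ∀ i, HasDerivAt (fun s => x s i) (x t i * g i) t) :
    HasDerivAt (fun s => relEntropy p (x s)) (-∑ i, p i * g i) t := by
  rw [← sum_neg_distrib]
  refine HasDerivAt.fun_sum fun i _ => ?_
  have := (((hd i).log (hx i).ne').const_mul (p i)).const_sub (p i * log (p i))
  rwa [mul_div_cancel_left₀ _ (hx i).ne'] at this

variable [Nonempty ι]

lemma sum_exp_pos (s : ι → ℝ) : 0 < ∑ j, exp (s j) :=
  sum_pos (fun _ _ => exp_pos _) univ_nonempty

lemma softmax_pos (s : ι → ℝ) (i : ι) : 0 < softmax s i :=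
  div_pos (exp_pos _) (sum_exp_pos s)

lemma softmax_mem_stdSimplex (s : ι → ℝ) : softmax s ∈ stdSimplex ℝ ι :=
  ⟨fun i => (softmax_pos s i).le, by simp only [softmax, ← sum_div, div_self (sum_exp_pos s).ne']⟩

lemma log_softmax (s : ι → ℝ) (i : ι) : log (softmax s i) = s i - log (∑ j, exp (s j)) := by
  rw [softmax, log_div (exp_pos _).ne' (sum_exp_pos s).ne', log_exp]

lemma regPayoff_softmax_sub {T : ℝ} (hT : T ≠ 0) (a : ι → ℝ) {p : ι → ℝ} (hp : ∑ i, p i = 1) :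
    regPayoff T a (softmax fun i => a i / T) - regPayoff T a p
      = T * relEntropy p (softmax fun i => a i / T) := by
  set y := softmax fun i => a i / T
  set c := log (∑ j, exp (a j / T))
  have ha i : a i = T * log (y i) + T * c := by
    rw [log_softmax]; field_simp; ring
  have key (x : ι → ℝ) (hx : ∑ i, x i = 1) :
      ∑ i, x i * a i = T * ∑ i, x i * log (y i) + T * c := by
    calc ∑ i, x i * a i = ∑ i, (T * (x i * log (y i)) + x i * (T * c)) :=
          sum_congr rfl fun i _ => by rw [ha i]; ring
      _ = T * ∑ i, x i * log (y i) + T * c := by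
          rw [sum_add_distrib, ← mul_sum, ← sum_mul, hx, one_mul]
  simp only [regPayoff, relEntropy, negEntropy, sum_sub_distrib, key _ hp,
    key y (softmax_mem_stdSimplex _).2]
  ring

lemma qlRate_eq_zero_of_eq_softmax {T : ℝ} (hT : T ≠ 0) {a y : ι → ℝ}
    (hya : y = softmax fun i => a i / T) (i : ι) :
    a i - ∑ j, y j * a j - T * (log (y i) - ∑ j, y j * log (y j)) = 0 := by
  have hy : ∑ j, y j = 1 := hya ▸ (softmax_mem_stdSimplex _).2
  have hlog j : T * log (y j) = a j - T * log (∑ k, exp (a k / T)) := by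
    rw [hya, log_softmax]; field_simp
  rw [mul_sub, hlog, mul_sum]
  simp only [mul_left_comm T, hlog, mul_sub, sum_sub_distrib, ← sum_mul, hy]
  ring

lemma relEntropy_entropicStep (T η : ℝ) (a q : ι → ℝ) {z : ι → ℝ} (hz : ∑ i, z i = 1) :
    relEntropy z (entropicStep T η a q) = (1 - η * T) * relEntropy z q
      - (1 - η * T) * relEntropy (entropicStep T η a q) q
      + η * (regPayoff T a (entropicStep T η a q) - regPayoff T a z) := by
  set p := entropicStep T η a q
  set L := log (∑ j, exp ((1 - η * T) * log (q j) + η * a j))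
  have hlog i : log (p i) = (1 - η * T) * log (q i) + η * a i - L := log_softmax _ i
  have hsum (x : ι → ℝ) (hx : ∑ i, x i = 1) : ∑ i, x i * log (p i)
      = (1 - η * T) * ∑ i, x i * log (q i) + η * ∑ i, x i * a i - L := by
    calc ∑ i, x i * log (p i)
        = ∑ i, ((1 - η * T) * (x i * log (q i)) + η * (x i * a i) - x i * L) :=
          sum_congr rfl fun i _ => by rw [hlog]; ring
      _ = _ := by
          rw [sum_sub_distrib, sum_add_distrib, ← mul_sum, ← mul_sum, ← sum_mul, hx, one_mul]
  simp only [relEntropy, regPayoff, negEntropy, sum_sub_distrib, hsum z hz,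
    hsum p (softmax_mem_stdSimplex _).2]
  ring

lemma relEntropy_entropicStep_le {T η : ℝ} (hηT : 0 ≤ η * T) (hηT' : η * T ≤ 1 / 2)
    (a b : ι → ℝ) {q z : ι → ℝ} (hq : q ∈ stdSimplex ℝ ι) (hq0 : ∀ i, 0 < q i)
    (hz : z ∈ stdSimplex ℝ ι) :
    relEntropy z (entropicStep T η a q) ≤ relEntropy z q
      + η * (regPayoff T b (entropicStep T η a q) - regPayoff T b z)
      + η * ∑ i, (q i - z i) * (a i - b i) + η ^ 2 * ∑ i, (a i - b i) ^ 2 := by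
  set p := entropicStep T η a q
  have hp : p ∈ stdSimplex ℝ ι := softmax_mem_stdSimplex _
  have hstep := relEntropy_entropicStep T η a q hz.2
  have hzq := relEntropy_nonneg hz hq hq0
  have hpq := sum_sq_sub_div_two_le_relEntropy hp hq hq0
  have hpay : regPayoff T a p - regPayoff T a z = regPayoff T b p - regPayoff T b z
      + ∑ i, (q i - z i) * (a i - b i) + ∑ i, (p i - q i) * (a i - b i) := by
    have hp' := regPayoff_sub_regPayoff T a b p
    have hz' := regPayoff_sub_regPayoff T a b z
    simp only [sub_mul, sum_sub_distrib] at hp' hz' ⊢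
    linarith
  -- the proximity term `-(1 - η T) KL(p ‖ q)` absorbs the error of evaluating `a` at `q`
  have herr : η * ∑ i, (p i - q i) * (a i - b i) - (∑ i, (p i - q i) ^ 2) / 4
      ≤ η ^ 2 * ∑ i, (a i - b i) ^ 2 := by
    simp only [mul_sum, sum_div, ← sum_sub_distrib]
    exact sum_le_sum fun i _ => by
      nlinarith [sq_nonneg ((p i - q i) / 2 - η * (a i - b i))]
  have hzq' : 0 ≤ η * T * relEntropy z q := mul_nonneg hηT hzq
  have hpq' : 0 ≤ (1 / 2 - η * T) * relEntropy p q :=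
    mul_nonneg (by linarith) (le_trans (by positivity) hpq)
  rw [hstep, hpay]
  linear_combination hzq' + hpq' + hpq / 2 + herr

end Distributions

section Profiles

variable {N : ℕ} {n : Fin N → ℕ}

def regGain (T w : Fin N → ℝ) (a x y : Strat n) : ℝ :=
  ∑ k, w k * (regPayoff (T k) (a k) (y k) - regPayoff (T k) (a k) (x k))

def weightedRelEntropy (w : Fin N → ℝ) (z x : Strat n) : ℝ :=
  ∑ k, w k * relEntropy (z k) (x k)

def mirrorStep (r : Strat n → Strat n) (T : Fin N → ℝ) (η : ℝ) (q : Strat n) : Strat n :=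
  fun k => entropicStep (T k) η (r q k) (q k)

def mirrorAverage (r : Strat n → Strat n) (T : Fin N → ℝ) (η : ℝ) (q₀ : Strat n) (M : ℕ) :
    Strat n :=
  ∑ m ∈ range M, (M : ℝ)⁻¹ • (mirrorStep r T η)^[m + 1] q₀

def IsWeightedMonotone (w : Fin N → ℝ) (r : Strat n → Strat n) : Prop :=
  ∀ x y : Strat n, JointSimplex x → JointSimplex y →
    0 ≤ ∑ k, w k * ∑ i, (x k i - y k i) * ((- r x k i) - (- r y k i))

lemma IsWeightedMonotone.sum_le {w : Fin N → ℝ} {r : Strat n → Strat n}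
    (hmono : IsWeightedMonotone w r) {x y : Strat n} (hx : JointSimplex x) (hy : JointSimplex y) :
    ∑ k, w k * ∑ i, (x k i - y k i) * (r x k i - r y k i) ≤ 0 := by
  rw [← neg_nonneg]
  convert hmono x y hx hy using 1
  simp only [← sum_neg_distrib, ← mul_neg, neg_sub_neg, ← mul_neg, neg_sub]

lemma setOf_jointSimplex_eq_pi :
    {x : Strat n | JointSimplex x} = Set.univ.pi fun k => stdSimplex ℝ (Fin (n k)) := by
  ext x; simp [JointSimplex]

lemma isCompact_setOf_jointSimplex : IsCompact {x : Strat n | JointSimplex x} := by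
  rw [setOf_jointSimplex_eq_pi]
  exact isCompact_univ_pi fun k => isCompact_stdSimplex _ _

lemma convex_setOf_jointSimplex : Convex ℝ {x : Strat n | JointSimplex x} := by
  rw [setOf_jointSimplex_eq_pi]
  exact convex_pi fun k _ => convex_stdSimplex ℝ _

lemma JointInterior.jointSimplex {x : Strat n} (hx : JointInterior x) : JointSimplex x :=
  fun k => ⟨fun i => ((hx k).1 i).le, (hx k).2⟩

lemma regGain_swap (T w : Fin N → ℝ) (a x y : Strat n) :
    regGain T w a x y = -regGain T w a y x := by
  simp only [regGain, ← sum_neg_distrib]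
  exact sum_congr rfl fun k _ => by ring

lemma regGain_le_regGain {w : Fin N → ℝ} {r : Strat n → Strat n} (hmono : IsWeightedMonotone w r)
    (T : Fin N → ℝ) {x y : Strat n} (hx : JointSimplex x) (hy : JointSimplex y) :
    regGain T w (r y) x y ≤ regGain T w (r x) x y := by
  have hdiff : regGain T w (r x) x y - regGain T w (r y) x y
      = ∑ k, w k * ∑ i, (x k i - y k i) * ((- r x k i) - (- r y k i)) := by
    simp only [regGain, ← sum_sub_distrib]
    refine sum_congr rfl fun k _ => ?_
    calc w k * (regPayoff (T k) (r x k) (y k) - regPayoff (T k) (r x k) (x k))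
          - w k * (regPayoff (T k) (r y k) (y k) - regPayoff (T k) (r y k) (x k))
        = w k * ((regPayoff (T k) (r x k) (y k) - regPayoff (T k) (r y k) (y k))
          - (regPayoff (T k) (r x k) (x k) - regPayoff (T k) (r y k) (x k))) := by ring
      _ = _ := by
        rw [regPayoff_sub_regPayoff, regPayoff_sub_regPayoff, ← sum_sub_distrib]
        exact congrArg _ (sum_congr rfl fun i _ => by ring)
  linarith [hmono x y hx hy]

lemma concaveOn_regGain {T w : Fin N → ℝ} (hT : ∀ k, 0 ≤ T k) (hw : ∀ k, 0 ≤ w k)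
    (a x : Strat n) :
    ConcaveOn ℝ {y : Strat n | JointSimplex y} (regGain T w a x) := by
  refine concaveOn_sum convex_setOf_jointSimplex _ fun k _ => ?_
  have h := ((concaveOn_regPayoff (hT k) (a k)).comp_linearMap
    (LinearMap.proj (R := ℝ) (φ := fun k => Fin (n k) → ℝ) k)).subset
    (fun y (hy : JointSimplex y) => hy k) convex_setOf_jointSimplex
  exact (h.add_const (-regPayoff (T k) (a k) (x k))).smul (hw k)

lemma regGain_nonneg_of_forall_regGain_nonneg {r : Strat n → Strat n} {T w : Fin N → ℝ}
    (hr : ContinuousOn r {z | JointSimplex z})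
    (hw : ∀ k, 0 ≤ w k) (hT : ∀ k, 0 ≤ T k) {x : Strat n} (hx : JointSimplex x)
    (h : ∀ z, JointSimplex z → 0 ≤ regGain T w (r z) z x) {y : Strat n} (hy : JointSimplex y) :
    0 ≤ regGain T w (r x) y x := by
  set z : ℝ → Strat n := fun t => (1 - t) • x + t • y
  have hz t (ht : t ∈ Set.Ioo (0 : ℝ) 1) : JointSimplex (z t) :=
    convex_setOf_jointSimplex hx hy (by linarith [ht.2]) ht.1.le (by ring)
  -- concavity in the deviation bounds the Minty gain at `z t` by `t` times the gain towards `y`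
  have hseg t (ht : t ∈ Set.Ioo (0 : ℝ) 1) : 0 ≤ regGain T w (r (z t)) y x := by
    have hconc := (concaveOn_regGain hT hw (r (z t)) x).2 hx hy
      (show (0 : ℝ) ≤ 1 - t by linarith [ht.2]) ht.1.le (by ring)
    have hself : regGain T w (r (z t)) x x = 0 := by simp [regGain]
    rw [hself, regGain_swap T w _ x y] at hconc
    have := h (z t) (hz t ht)
    rw [regGain_swap] at this
    simp only [smul_eq_mul] at hconc
    nlinarith [ht.1]
  have hzlim : Tendsto z (𝓝[>] 0) (𝓝[{z | JointSimplex z}] x) := by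
    refine tendsto_nhdsWithin_iff.2 ⟨?_, ?_⟩
    · have hc : Continuous z := by fun_prop
      have h0 : z 0 = x := by simp [z]
      simpa [h0] using (hc.tendsto 0).mono_left nhdsWithin_le_nhds
    · filter_upwards [Ioo_mem_nhdsGT one_pos] with t ht using hz t ht
  have hcont : Continuous fun a : Strat n => regGain T w a y x := by
    unfold regGain regPayoff
    fun_prop
  exact ge_of_tendsto ((hcont.tendsto _).comp ((hr x hx).tendsto.comp hzlim))
    (by filter_upwards [Ioo_mem_nhdsGT one_pos] with t ht using hseg t ht)

lemma continuous_regGain (T w : Fin N → ℝ) (a x : Strat n) : Continuous (regGain T w a x) := by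
  have := fun k => continuous_regPayoff (T k) (a k)
  unfold regGain
  fun_prop

end Profiles

section QRE

variable {N : ℕ} {n : Fin N → ℕ} {r : Strat n → Strat n} {T w : Fin N → ℝ}

lemma IsQRE.eq_softmax {x : Strat n} (h : IsQRE r T x) (k : Fin N) :
    x k = softmax fun i => r x k i / T k :=
  funext (h.2 k)

variable [∀ k, Nonempty (Fin (n k))]

lemma IsQRE.jointInterior {x : Strat n} (h : IsQRE r T x) : JointInterior x :=
  fun k => ⟨fun i => h.eq_softmax k ▸ softmax_pos _ i, (h.1 k).2⟩

lemma IsQRE.regGain_eq (hT : ∀ k, T k ≠ 0) {x y : Strat n} (h : IsQRE r T x)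
    (hy : JointSimplex y) :
    regGain T w (r x) y x = ∑ k, w k * (T k * relEntropy (y k) (x k)) := by
  refine sum_congr rfl fun k _ => congrArg (w k * ·) ?_
  have := regPayoff_softmax_sub (hT k) (r x k) (hy k).2
  rwa [← h.eq_softmax k] at this

lemma IsQRE.regGain_nonneg (hT : ∀ k, 0 < T k) (hw : ∀ k, 0 ≤ w k) {x y : Strat n}
    (h : IsQRE r T x) (hy : JointSimplex y) : 0 ≤ regGain T w (r x) y x := by
  rw [h.regGain_eq (fun k => (hT k).ne') hy]
  exact sum_nonneg fun k _ => mul_nonneg (hw k) (mul_nonneg (hT k).le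
    (relEntropy_nonneg (hy k) (h.1 k) (h.jointInterior k).1))

lemma isQRE_of_regGain_nonneg (hT : ∀ k, 0 < T k) (hw : ∀ k, 0 < w k) {x : Strat n}
    (hx : JointSimplex x) (h : ∀ y, JointSimplex y → 0 ≤ regGain T w (r x) y x) :
    IsQRE r T x := by
  set y : Strat n := fun k => softmax fun i => r x k i / T k
  have hy : JointSimplex y := fun k => softmax_mem_stdSimplex _
  have hgain : regGain T w (r x) x y = ∑ k, w k * (T k * relEntropy (x k) (y k)) :=
    sum_congr rfl fun k _ => congrArg (w k * ·) (regPayoff_softmax_sub (hT k).ne' _ (hx k).2)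
  have hsum : ∑ k, w k * (T k * relEntropy (x k) (y k)) ≤ 0 := by
    linarith [h y hy, regGain_swap T w (r x) y x]
  have hnonneg k : 0 ≤ w k * (T k * relEntropy (x k) (y k)) :=
    mul_nonneg (hw k).le (mul_nonneg (hT k).le (relEntropy_nonneg (hx k) (hy k) (softmax_pos _)))
  refine ⟨hx, fun k i => congrFun (eq_of_relEntropy_nonpos (hx k) (hy k) (softmax_pos _) ?_) i⟩
  have hk := (single_le_sum (fun k _ => hnonneg k) (mem_univ k)).trans hsum
  exact le_of_not_gt fun hpos => (mul_pos (hw k) (mul_pos (hT k) hpos)).not_ge hk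

lemma IsQRE.qlSolution_const (hT : ∀ k, T k ≠ 0) {y : Strat n} (h : IsQRE r T y) :
    QLSolution r T fun _ => y := by
  refine ⟨fun _ => h.jointInterior, fun t k i => ?_⟩
  simpa [qlRate_eq_zero_of_eq_softmax (hT k) (h.eq_softmax k) i] using hasDerivAt_const t (y k i)

end QRE

section MirrorAscent

variable {N : ℕ} {n : Fin N → ℕ} [∀ k, Nonempty (Fin (n k))] {r : Strat n → Strat n}
  {T w : Fin N → ℝ}

lemma jointInterior_mirrorStep (η : ℝ) (q : Strat n) : JointInterior (mirrorStep r T η q) :=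
  fun _ => ⟨softmax_pos _, (softmax_mem_stdSimplex _).2⟩

lemma weightedRelEntropy_mirrorStep_le (hmono : IsWeightedMonotone w r) (hw : ∀ k, 0 ≤ w k)
    {R : ℝ} (hR : ∀ x, JointSimplex x → ∀ k i, |r x k i| ≤ R) {η : ℝ} (hη : 0 ≤ η)
    (hT : ∀ k, 0 ≤ T k) (hηT : ∀ k, η * T k ≤ 1 / 2) {q z : Strat n} (hq : JointInterior q)
    (hz : JointSimplex z) :
    weightedRelEntropy w z (mirrorStep r T η q) ≤ weightedRelEntropy w z q
      + η * regGain T w (r z) z (mirrorStep r T η q)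
      + η ^ 2 * ∑ k, w k * (n k * (2 * R) ^ 2) := by
  have hstep k := relEntropy_entropicStep_le (mul_nonneg hη (hT k)) (hηT k) (r q k) (r z k)
    (hq.jointSimplex k) (hq k).1 (hz k)
  have hsq (k : Fin N) : ∑ i, (r q k i - r z k i) ^ 2 ≤ n k * (2 * R) ^ 2 := by
    calc ∑ i, (r q k i - r z k i) ^ 2 ≤ ∑ _i : Fin (n k), (2 * R) ^ 2 :=
          sum_le_sum fun i _ => by
            have h1 := abs_le.1 (hR q hq.jointSimplex k i)
            have h2 := abs_le.1 (hR z hz k i)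
            nlinarith
      _ = n k * (2 * R) ^ 2 := by simp
  have hsum := sum_le_sum fun k (_ : k ∈ univ) => mul_le_mul_of_nonneg_left (hstep k) (hw k)
  have hsq' := sum_le_sum fun k (_ : k ∈ univ) => mul_le_mul_of_nonneg_left (hsq k) (hw k)
  simp only [mul_add, sum_add_distrib, mul_left_comm (w _) η, mul_left_comm (w _) (η ^ 2),
    ← mul_sum] at hsum
  have := mul_le_mul_of_nonneg_left (hmono.sum_le hq.jointSimplex hz) hη
  have := mul_le_mul_of_nonneg_left hsq' (sq_nonneg η)
  simp only [weightedRelEntropy, regGain, mirrorStep]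
  linarith

lemma jointInterior_iterate_mirrorStep (η : ℝ) {q₀ : Strat n} (hq₀ : JointInterior q₀) (m : ℕ) :
    JointInterior ((mirrorStep r T η)^[m] q₀) := by
  cases m with
  | zero => exact hq₀
  | succ m => simpa only [Function.iterate_succ_apply'] using jointInterior_mirrorStep η _

lemma jointSimplex_mirrorAverage (η : ℝ) {q₀ : Strat n} (hq₀ : JointInterior q₀) {M : ℕ}
    (hM : 0 < M) : JointSimplex (mirrorAverage r T η q₀ M) :=
  convex_setOf_jointSimplex.sum_mem (fun _ _ => by positivity) (by simp [hM.ne'])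
    fun m _ => (jointInterior_iterate_mirrorStep η hq₀ (m + 1)).jointSimplex

lemma regGain_mirrorAverage_ge (hmono : IsWeightedMonotone w r) (hw : ∀ k, 0 ≤ w k)
    {R : ℝ} (hR : ∀ x, JointSimplex x → ∀ k i, |r x k i| ≤ R) {η : ℝ} (hη : 0 < η)
    (hT : ∀ k, 0 ≤ T k) (hηT : ∀ k, η * T k ≤ 1 / 2) {q₀ z : Strat n} (hq₀ : JointInterior q₀)
    (hz : JointSimplex z) {M : ℕ} (hM : 0 < M) :
    -(weightedRelEntropy w z q₀ / (η * M) + η * ∑ k, w k * (n k * (2 * R) ^ 2))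
      ≤ regGain T w (r z) z (mirrorAverage r T η q₀ M) := by
  set q : ℕ → Strat n := fun m => (mirrorStep r T η)^[m] q₀
  have hq := jointInterior_iterate_mirrorStep (r := r) (T := T) η hq₀
  have hM' : (0 : ℝ) < M := Nat.cast_pos.2 hM
  have hweights : ∑ m ∈ range M, (M : ℝ)⁻¹ = 1 := by simp [hM'.ne']
  have hregret := neg_le_sum_range_of_le_add (D := fun m => weightedRelEntropy w z (q m))
    (G := fun m => regGain T w (r z) z (q m))
    (fun m => sum_nonneg fun k _ => mul_nonneg (hw k)
      (relEntropy_nonneg (hz k) ((hq m).jointSimplex k) (hq m k).1))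
    (fun m => by
      simpa only [q, Function.iterate_succ_apply'] using
        weightedRelEntropy_mirrorStep_le hmono hw hR hη.le hT hηT (hq m) hz) M
  change -(weightedRelEntropy w z q₀ + _) ≤ _ at hregret
  have hjensen := (concaveOn_regGain hT hw (r z) z).le_map_sum (t := range M)
    (fun _ _ => by positivity) hweights fun m _ => (hq (m + 1)).jointSimplex
  simp only [smul_eq_mul, ← mul_sum] at hjensen
  set C := ∑ k, w k * (n k * (2 * R) ^ 2)
  calc -(weightedRelEntropy w z q₀ / (η * M) + η * C)
      = (M : ℝ)⁻¹ * (-(weightedRelEntropy w z q₀ + M * (η ^ 2 * C)) / η) := by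
        field_simp
    _ ≤ (M : ℝ)⁻¹ * ∑ m ∈ range M, regGain T w (r z) z (q (m + 1)) := by
        gcongr
        rw [div_le_iff₀ hη]
        linarith
    _ ≤ _ := hjensen

lemma exists_regGain_nonneg (hr : ContinuousOn r {z | JointSimplex z})
    (hmono : IsWeightedMonotone w r) (hw : ∀ k, 0 ≤ w k) (hT : ∀ k, 0 < T k) :
    ∃ x, JointSimplex x ∧ ∀ z, JointSimplex z → 0 ≤ regGain T w (r z) z x := by
  obtain ⟨R, hR⟩ := isCompact_setOf_jointSimplex.exists_bound_of_continuousOn hr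
  have hR' x (hx : JointSimplex x) k i : |r x k i| ≤ R :=
    (norm_le_pi_norm (r x k) i).trans ((norm_le_pi_norm (r x) k).trans (hR x hx))
  obtain ⟨c, hc, hcT⟩ :=
    exists_pos_lt_of_forall_pos fun k => one_div_pos.2 (mul_pos two_pos (hT k))
  -- with `η j = c / (j + 1)` and `(j + 1) ^ 2` steps, the regret bound is `O(1 / (j + 1))`
  set η : ℕ → ℝ := fun j => c / (j + 1)
  have hη j : 0 < η j := by positivity
  have hηT j k : η j * T k ≤ 1 / 2 := by
    have h1 : η j * T k ≤ c * T k :=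
      mul_le_mul_of_nonneg_right (div_le_self hc.le (by simp)) (hT k).le
    have h2 := (lt_div_iff₀ (mul_pos two_pos (hT k))).1 (hcT k)
    linarith
  set q₀ : Strat n := fun k => softmax 0
  have hq₀ : JointInterior q₀ := fun k => ⟨softmax_pos 0, (softmax_mem_stdSimplex 0).2⟩
  set x : ℕ → Strat n := fun j => mirrorAverage r T (η j) q₀ ((j + 1) ^ 2)
  obtain ⟨xb, hxb, φ, hφ, hlim⟩ := isCompact_setOf_jointSimplex.tendsto_subseq
    fun j => jointSimplex_mirrorAverage (r := r) (T := T) (η j) hq₀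
      (by positivity : 0 < (j + 1) ^ 2)
  refine ⟨xb, hxb, fun z hz => ?_⟩
  set C := ∑ k, w k * (n k * (2 * R) ^ 2)
  have hbound (j : ℕ) : -(weightedRelEntropy w z q₀ / c + c * C) * (1 / ((j : ℝ) + 1))
      ≤ regGain T w (r z) z (x j) := by
    have := regGain_mirrorAverage_ge hmono hw hR' (hη j) (fun k => (hT k).le) (hηT j) hq₀ hz
      (by positivity : 0 < (j + 1) ^ 2)
    change -(weightedRelEntropy w z q₀ / _ + η j * C) ≤ _ at this
    convert this using 1
    simp only [η]
    push_cast
    field_simp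
  have hzero : Tendsto
      (fun j : ℕ => -(weightedRelEntropy w z q₀ / c + c * C) * (1 / ((j : ℝ) + 1)))
      atTop (𝓝 0) := by
    simpa using tendsto_one_div_add_atTop_nhds_zero_nat.const_mul
      (-(weightedRelEntropy w z q₀ / c + c * C))
  exact le_of_tendsto_of_tendsto' (hzero.comp hφ.tendsto_atTop)
    (((continuous_regGain T w (r z) z).tendsto xb).comp hlim) fun j => hbound (φ j)

lemma exists_isQRE (hr : ContinuousOn r {z | JointSimplex z}) (hmono : IsWeightedMonotone w r)
    (hw : ∀ k, 0 < w k) (hT : ∀ k, 0 < T k) : ∃ x, IsQRE r T x := by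
  obtain ⟨x, hx, hminty⟩ := exists_regGain_nonneg hr hmono (fun k => (hw k).le) hT
  exact ⟨x, isQRE_of_regGain_nonneg hT hw hx fun y hy =>
    regGain_nonneg_of_forall_regGain_nonneg hr (fun k => (hw k).le) (fun k => (hT k).le) hx
      hminty hy⟩

end MirrorAscent

section Convergence

variable {N : ℕ} {n : Fin N → ℕ} {r : Strat n → Strat n} {T w : Fin N → ℝ}

lemma sq_sub_le_weightedRelEntropy (hw : ∀ k, 0 < w k) {z x : Strat n} (hz : JointSimplex z)
    (hx : JointInterior x) (k : Fin N) (i : Fin (n k)) :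
    (x k i - z k i) ^ 2 ≤ 2 / w k * weightedRelEntropy w z x := by
  have hkl := sum_sq_sub_div_two_le_relEntropy (hz k) (hx.jointSimplex k) (hx k).1
  have hi : (z k i - x k i) ^ 2 ≤ ∑ j, (z k j - x k j) ^ 2 :=
    single_le_sum (f := fun j => (z k j - x k j) ^ 2) (fun _ _ => sq_nonneg _) (mem_univ i)
  have hk : w k * relEntropy (z k) (x k) ≤ weightedRelEntropy w z x :=
    single_le_sum (f := fun k => w k * relEntropy (z k) (x k))
      (fun k _ => mul_nonneg (hw k).le (relEntropy_nonneg (hz k) (hx.jointSimplex k) (hx k).1))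
      (mem_univ k)
  rw [div_mul_eq_mul_div, le_div_iff₀ (hw k)]
  nlinarith [hw k]

lemma tendsto_of_tendsto_weightedRelEntropy {α : Type*} {l : Filter α} (hw : ∀ k, 0 < w k)
    {z : Strat n} (hz : JointSimplex z) {x : α → Strat n} (hx : ∀ t, JointInterior (x t))
    (h : Tendsto (fun t => weightedRelEntropy w z (x t)) l (𝓝 0)) : Tendsto x l (𝓝 z) := by
  refine tendsto_pi_nhds.2 fun k => tendsto_pi_nhds.2 fun i => ?_
  rw [tendsto_iff_dist_tendsto_zero]
  have hsqrt : Tendsto (fun t => √(2 / w k * weightedRelEntropy w z (x t))) l (𝓝 0) := by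
    simpa using (h.const_mul (2 / w k)).sqrt
  exact squeeze_zero (fun _ => dist_nonneg) (fun t => by
    rw [Real.dist_eq]
    exact Real.abs_le_sqrt (sq_sub_le_weightedRelEntropy hw hz (hx t) k i)) hsqrt

theorem QLSolution.tendsto_of_isQRE [∀ k, Nonempty (Fin (n k))]
    (hmono : IsWeightedMonotone w r) (hw : ∀ k, 0 < w k) (hT : ∀ k, 0 < T k) {xb : Strat n}
    (hxb : IsQRE r T xb) {x : ℝ → Strat n} (hx : QLSolution r T x) : Tendsto x atTop (𝓝 xb) := by
  obtain ⟨c, hc, hcT⟩ := exists_pos_lt_of_forall_pos hT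
  set V := fun t => weightedRelEntropy w xb (x t)
  have hV0 t : 0 ≤ V t := sum_nonneg fun k _ => mul_nonneg (hw k).le
    (relEntropy_nonneg (hxb.1 k) ((hx.1 t).jointSimplex k) (hx.1 t k).1)
  have hV t : HasDerivAt V (-(regGain T w (r (x t)) (x t) xb
      + ∑ k, w k * (T k * relEntropy (xb k) (x t k)))) t := by
    have := HasDerivAt.fun_sum fun k (_ : k ∈ univ) =>
      (hasDerivAt_relEntropy (xb k) (hx.1 t k).1 (hx.2 t k)).const_mul (w k)
    refine this.congr_deriv ?_
    rw [regGain, ← sum_add_distrib, ← sum_neg_distrib]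
    exact sum_congr rfl fun k _ => by rw [sum_mul_qlRate _ _ (hxb.1 k).2]; ring
  refine tendsto_of_tendsto_weightedRelEntropy hw hxb.1 hx.1
    (tendsto_zero_of_hasDerivAt_le_neg_mul hc hV (fun t => ?_) hV0)
  have hgain := (hxb.regGain_nonneg hT (fun k => (hw k).le) (hx.1 t).jointSimplex).trans
    (regGain_le_regGain hmono T (hx.1 t).jointSimplex hxb.1)
  have hdecay : c * V t ≤ ∑ k, w k * (T k * relEntropy (xb k) (x t k)) := by
    simp only [V, weightedRelEntropy, mul_sum]
    exact sum_le_sum fun k _ => by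
      have := relEntropy_nonneg (hxb.1 k) ((hx.1 t).jointSimplex k) (hx.1 t k).1
      have := mul_le_mul_of_nonneg_right (hcT k).le (mul_nonneg (hw k).le this)
      linarith
  linarith

end Convergence

theorem Q_learning_converges_in_weighted_monotone_games
    {N : ℕ} {n : Fin N → ℕ} (hn : ∀ k, 0 < n k)
    (r : Strat n → Strat n)
    -- the rewards (hence the pseudo-gradient F = (−r_k)_k) are continuous on Δ
    (hr : ContinuousOn r {z | JointSimplex z})
    -- Γ is weighted monotone: ⟨x − y, F(x; w) − F(y; w)⟩ ≥ 0 on Δ, F_k = −r_k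
    (w : Fin N → ℝ) (hw : ∀ k, 0 < w k)
    (hmono : ∀ x y : Strat n, JointSimplex x → JointSimplex y →
      0 ≤ ∑ k, w k * ∑ i, (x k i - y k i) * ((- r x k i) - (- r y k i)))
    (T : Fin N → ℝ) (hT : ∀ k, 0 < T k) :
    ∃ xbar : Strat n, IsQRE r T xbar ∧
      (∀ y, IsQRE r T y → y = xbar) ∧
      ∀ x : ℝ → Strat n, QLSolution r T x → Tendsto x atTop (𝓝 xbar) := by
  have : ∀ k, Nonempty (Fin (n k)) := fun k => Fin.pos_iff_nonempty.mp (hn k)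
  obtain ⟨xb, hxb⟩ := exists_isQRE hr hmono hw hT
  have hconv : ∀ x, QLSolution r T x → Tendsto x atTop (𝓝 xb) := fun x hx =>
    hx.tendsto_of_isQRE hmono hw hT hxb
  -- a second QRE is a rest point of the dynamics, so it must be `xb`
  refine ⟨xb, hxb, fun y hy => ?_, hconv⟩
  exact tendsto_const_nhds_iff.mp (hconv _ (hy.qlSolution_const fun k => (hT k).ne'))
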